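/- Let P be the centrally orthocomplete projection OML of a synaptic algebra A, and let 𝒬 be an OML type class (closed under: central intervals, arbitrary cartesian products, and OML isomorphism). Then Q := {q ∈ P : P[0,q] ∈ 𝒬} is a projective TD subset of P. If moreover 𝒬 is closed under all intervals L[0,p] (a strong OML type class), then Q is STD (downward closed and closed under suprema of centrally orthogonal families). -/

import Mathlib

universe u

/-- A (partial axiomatization of a) synaptic algebra: a partially ordered real
vector subspace `A` of an associative unital algebra `R`, closed under squaring
and quadratic maps, in which the projections form an orthomodular lattice with
`p⊥ = 1 - p` and, for projections, `p ≤ q ↔ p * q = p ↔ q * p = p`. -/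
structure Synaptic (R : Type u) [Ring R] [PartialOrder R] where
  A : Set R
  one_mem : (1 : R) ∈ A
  add_mem : ∀ {a b : R}, a ∈ A → b ∈ A → a + b ∈ A
  neg_mem : ∀ {a : R}, a ∈ A → -a ∈ A
  sq_mem : ∀ {a : R}, a ∈ A → a * a ∈ A
  quad_mem : ∀ {a b : R}, a ∈ A → b ∈ A → a * b * a ∈ A
  add_le_add_right : ∀ {a b : R}, a ≤ b → ∀ c : R, a + c ≤ b + c
  sq_nonneg' : ∀ {a : R}, a ∈ A → 0 ≤ a * a
  quad_nonneg : ∀ {a b : R}, a ∈ A → b ∈ A → 0 ≤ b → 0 ≤ a * b * a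
  zero_lt_one' : (0 : R) < 1
  /-- for projections, the order is characterized multiplicatively -/
  proj_le_iff : ∀ {p q : R}, p ∈ A → p * p = p → q ∈ A → q * q = q →
    (p ≤ q ↔ p * q = p ∧ q * p = p)

namespace Synaptic

variable {R : Type u} [Ring R] [PartialOrder R] (S : Synaptic R)

/-- `p` is a projection of `A`. -/
def IsProj (p : R) : Prop := p ∈ S.A ∧ p * p = p

/-- `s` is a symmetry of `A`. -/
def IsSym (s : R) : Prop := s ∈ S.A ∧ s * s = 1

/-- `c` belongs to the center `C(A)` of `A`. -/
def Central (c : R) : Prop := c ∈ S.A ∧ ∀ a ∈ S.A, c * a = a * c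

/-- `c` is a central projection. -/
def IsCentralProj (c : R) : Prop := S.IsProj c ∧ S.Central c

/-- Equivalence of projections: `p ∼ q` iff there is a finite chain of
projections from `p` to `q` in which consecutive members are exchanged by a
symmetry of `A`. -/
def Equiv (p q : R) : Prop :=
  ∃ n : ℕ, ∃ e : ℕ → R, e 0 = p ∧ e n = q ∧ (∀ i ≤ n, S.IsProj (e i)) ∧
    ∀ i < n, ∃ s : R, S.IsSym s ∧ s * e i * s = e (i + 1)

/-- `p ⪯ q`: `p` is equivalent to a subprojection of `q`. -/
def SubEquiv (p q : R) : Prop := ∃ q₁ : R, S.IsProj q₁ ∧ q₁ ≤ q ∧ S.Equiv p q₁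

/-- `p` is the supremum, in the projection lattice `P`, of the set `F` of
projections. -/
def IsSupProj (F : Set R) (p : R) : Prop :=
  S.IsProj p ∧ (∀ q ∈ F, q ≤ p) ∧ ∀ r : R, S.IsProj r → (∀ q ∈ F, q ≤ r) → p ≤ r

/-- `p` is the infimum, in the projection lattice `P`, of the set `F` of
projections. -/
def IsInfProj (F : Set R) (p : R) : Prop :=
  S.IsProj p ∧ (∀ q ∈ F, p ≤ q) ∧ ∀ r : R, S.IsProj r → (∀ q ∈ F, r ≤ q) → r ≤ p

/-- `F` is a (pairwise) orthogonal set of projections. -/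
def OrthSet (F : Set R) : Prop :=
  (∀ p ∈ F, S.IsProj p) ∧ ∀ p ∈ F, ∀ q ∈ F, p ≠ q → p * q = 0

/-- `F` is a centrally orthogonal set of projections: its members are dominated
by a pairwise orthogonal family of central projections. -/
def CentOrthSet (F : Set R) : Prop :=
  (∀ p ∈ F, S.IsProj p) ∧ ∃ c : R → R,
    (∀ p ∈ F, S.IsCentralProj (c p) ∧ p ≤ c p) ∧
    ∀ p ∈ F, ∀ q ∈ F, p ≠ q → c p * c q = 0

/-- The projection lattice `P` is centrally orthocomplete. -/
def CentOrthocomplete : Prop :=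
  ∀ F : Set R, S.CentOrthSet F → ∃ p : R, S.IsSupProj F p

/-- The projection lattice `P` is complete. -/
def CompleteP : Prop :=
  ∀ F : Set R, (∀ p ∈ F, S.IsProj p) → ∃ p : R, S.IsSupProj F p

/-- `c` is the central cover `γ a` of `a`: the smallest central projection `c`
with `a * c = a`. -/
def IsCentralCover (a c : R) : Prop :=
  S.IsCentralProj c ∧ a * c = a ∧
    ∀ d : R, S.IsCentralProj d → a * d = a → c ≤ d

/-- `Q` is a type-determining (TD) set of projections: closed under suprema of
centrally orthogonal families and under meets (= products) with central
projections. -/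
def TD (Q : Set R) : Prop :=
  (∀ q ∈ Q, S.IsProj q) ∧
  (∀ F : Set R, F ⊆ Q → S.CentOrthSet F → ∀ p : R, S.IsSupProj F p → p ∈ Q) ∧
  (∀ q ∈ Q, ∀ c : R, S.IsCentralProj c → q * c ∈ Q)

/-- `Q` is projective: closed under equivalence of projections. -/
def Projective (Q : Set R) : Prop :=
  ∀ p q : R, q ∈ Q → S.Equiv p q → p ∈ Q

/-- `Q` is downward closed (`Q↓ ⊆ Q`). -/
def DownwardClosed (Q : Set R) : Prop :=
  ∀ q ∈ Q, ∀ p : R, S.IsProj p → p ≤ q → p ∈ Q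

/-- The projection `p` is modular: the interval OML `P[0,p]` satisfies the
modular law (stated relationally via suprema and infima in `P`, which agree
with those computed in `P[0,p]`). -/
def ModularProj (p : R) : Prop :=
  S.IsProj p ∧ ∀ a b c : R, S.IsProj a → S.IsProj b → S.IsProj c →
    a ≤ p → b ≤ p → c ≤ p → a ≤ c →
    ∀ i s j m : R, S.IsInfProj {b, c} i → S.IsSupProj {a, i} s →
      S.IsSupProj {a, b} j → S.IsInfProj {j, c} m → s = m

/-- `p` and `q` are perspective in the interval `P[0,r]`: they have a common
complement `x` there. -/
def PerspectiveIn (r p q : R) : Prop :=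
  ∃ x : R, S.IsProj x ∧ x ≤ r ∧ S.IsSupProj {p, x} r ∧ S.IsSupProj {q, x} r ∧
    S.IsInfProj {p, x} 0 ∧ S.IsInfProj {q, x} 0

end Synaptic

/-- A bundled orthomodular lattice, with all structure stated relationally. -/
structure BOML : Type (u + 1) where
  α : Type u
  le : α → α → Prop
  compl : α → α
  le_refl : ∀ a, le a a
  le_trans : ∀ a b c, le a b → le b c → le a c
  le_antisymm : ∀ a b, le a b → le b a → a = b
  exists_bot : ∃ b, ∀ a, le b a
  exists_top : ∃ t, ∀ a, le a t
  exists_sup : ∀ a b, ∃ s, le a s ∧ le b s ∧ ∀ u, le a u → le b u → le s u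
  exists_inf : ∀ a b, ∃ i, le i a ∧ le i b ∧ ∀ v, le v a → le v b → le v i
  compl_compl : ∀ a, compl (compl a) = a
  compl_antitone : ∀ a b, le a b → le (compl b) (compl a)
  sup_compl_top : ∀ a u, le a u → le (compl a) u → ∀ x, le x u
  inf_compl_bot : ∀ a v, le v a → le v (compl a) → ∀ x, le v x
  orthomodular : ∀ a b i s, le a b →
    (le i b ∧ le i (compl a) ∧ ∀ v, le v b → le v (compl a) → le v i) →
    (le a s ∧ le i s ∧ ∀ u, le a u → le i u → le s u) → s = b

namespace BOML

/-- `m` is the infimum of `x` and `y` in `L`. -/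
def RelInf (L : BOML) (x y m : L.α) : Prop :=
  L.le m x ∧ L.le m y ∧ ∀ v, L.le v x → L.le v y → L.le v m

/-- `s` is the supremum of `x` and `y` in `L`. -/
def RelSup (L : BOML) (x y s : L.α) : Prop :=
  L.le x s ∧ L.le y s ∧ ∀ u, L.le x u → L.le y u → L.le s u

/-- `c` is central in `L`: every `x` satisfies `x = (x ⊓ c) ⊔ (x ⊓ cᶜ)`. -/
def IsCentralEl (L : BOML) (c : L.α) : Prop :=
  ∀ x : L.α, ∃ i₁ i₂ : L.α,
    L.RelInf x c i₁ ∧ L.RelInf x (L.compl c) i₂ ∧ L.RelSup i₁ i₂ x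

/-- `L'` is (isomorphic to) the interval `L[0,c]`, with the relative
orthocomplementation `x ↦ c ⊓ xᶜ`. -/
def IsIntervalOf (L' L : BOML) (c : L.α) : Prop :=
  ∃ e : L'.α ≃ { x : L.α // L.le x c },
    (∀ a b : L'.α, L'.le a b ↔ L.le (e a) (e b)) ∧
    (∀ a : L'.α, L.RelInf c (L.compl (e a)) (e (L'.compl a)))

/-- `L` is (isomorphic to) the cartesian product of the family `f`, with
coordinatewise operations and relations. -/
def IsProductOf (L : BOML) {ι : Type u} (f : ι → BOML) : Prop :=
  ∃ e : L.α ≃ ∀ i, (f i).α,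
    (∀ a b : L.α, L.le a b ↔ ∀ i, (f i).le (e a i) (e b i)) ∧
    (∀ (a : L.α) (i : ι), e (L.compl a) i = (f i).compl (e a i))

/-- `L` and `L'` are isomorphic OMLs. -/
def IsoOf (L L' : BOML) : Prop :=
  ∃ e : L.α ≃ L'.α,
    (∀ a b : L.α, L.le a b ↔ L'.le (e a) (e b)) ∧
    (∀ a : L.α, e (L.compl a) = L'.compl (e a))

end BOML

/-- `L` represents the interval `P[0,q]` of the projection lattice of the
synaptic algebra `S`, with orthocomplementation `x ↦ q ∧ x⊥ = q - x`. -/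
def Synaptic.RepresentsInterval {R : Type u} [Ring R] [PartialOrder R]
    (S : Synaptic R) (L : BOML.{u}) (q : R) : Prop :=
  ∃ e : L.α ≃ { x : R // S.IsProj x ∧ x ≤ q },
    (∀ a b : L.α, L.le a b ↔ ((e a : R) ≤ (e b : R))) ∧
    (∀ a : L.α, ((e (L.compl a)) : R) = q - ((e a) : R))

/-!
Every condition on `Q = {q ∈ P : P[0,q] ∈ 𝒬}` is witnessed by an OML isomorphism of intervals
of `P`. If `s` is the supremum of a centrally orthogonal family `(y i)` dominated by orthogonal
central projections `(d i)`, then `s * d i = y i`, and `x ↦ (x * d i)ᵢ` identifies `P[0,s]` with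
`∏ P[0,y i]`; its inverse takes suprema, which exist by central orthocompleteness. For a central
`c`, `q * c` is central in `P[0,q]` with interval `P[0,q * c]`. A symmetry `s` conjugates
`P[0,p]` onto `P[0,s * p * s]`, and projectivity follows along the chain defining equivalence.
For `p ≤ q`, `P[0,p]` is an interval of `P[0,q]`.
-/

namespace Synaptic

variable {R : Type u} [Ring R]

lemma conj_conj {s : R} (hs : s * s = 1) (a : R) : s * (s * a * s) * s = a := by
  calc s * (s * a * s) * s = s * s * a * (s * s) := by noncomm_ring
    _ = a := by rw [hs, one_mul, mul_one]

lemma conj_mul_conj {s : R} (hs : s * s = 1) (a b : R) :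
    s * a * s * (s * b * s) = s * (a * b) * s := by
  calc s * a * s * (s * b * s) = s * a * (s * s) * b * s := by noncomm_ring
    _ = s * (a * b) * s := by rw [hs, mul_one]; noncomm_ring

variable [PartialOrder R]

/-- The interval `P[0,q]` of the projection lattice. -/
abbrev Interval (S : Synaptic R) (q : R) : Type u := {x : R // S.IsProj x ∧ x ≤ q}

variable {S : Synaptic R}

lemma sub_mem {a b : R} (ha : a ∈ S.A) (hb : b ∈ S.A) : a - b ∈ S.A := by
  simpa [sub_eq_add_neg] using S.add_mem ha (S.neg_mem hb)

lemma isInfProj_pair_iff {a b m : R} :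
    S.IsInfProj {a, b} m ↔
      S.IsProj m ∧ m ≤ a ∧ m ≤ b ∧ ∀ v, S.IsProj v → v ≤ a → v ≤ b → v ≤ m := by
  simp [IsInfProj, and_assoc]

lemma isSupProj_pair_iff {a b m : R} :
    S.IsSupProj {a, b} m ↔
      S.IsProj m ∧ a ≤ m ∧ b ≤ m ∧ ∀ u, S.IsProj u → a ≤ u → b ≤ u → m ≤ u := by
  simp [IsSupProj, and_assoc]

namespace IsCentralProj

variable {a c : R}

lemma comm (hc : S.IsCentralProj c) (ha : a ∈ S.A) : c * a = a * c := hc.2.2 a ha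

lemma one_sub (hc : S.IsCentralProj c) : S.IsCentralProj (1 - c) := by
  refine ⟨⟨sub_mem S.one_mem hc.1.1, ?_⟩, sub_mem S.one_mem hc.1.1, fun a ha => ?_⟩
  · rw [sub_mul, one_mul, mul_sub, mul_one, hc.1.2, sub_self, sub_zero]
  · rw [sub_mul, one_mul, mul_sub, mul_one, hc.comm ha]

end IsCentralProj

namespace IsProj

variable {a c p q v x : R}

lemma mul_eq_of_le (hp : S.IsProj p) (hq : S.IsProj q) (h : p ≤ q) :
    p * q = p ∧ q * p = p :=
  (S.proj_le_iff hp.1 hp.2 hq.1 hq.2).1 h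

lemma le_of_mul_eq (hp : S.IsProj p) (hq : S.IsProj q) (h₁ : p * q = p) (h₂ : q * p = p) :
    p ≤ q :=
  (S.proj_le_iff hp.1 hp.2 hq.1 hq.2).2 ⟨h₁, h₂⟩

lemma sub (hp : S.IsProj p) (hq : S.IsProj q) (h : p ≤ q) : S.IsProj (q - p) := by
  obtain ⟨h₁, h₂⟩ := hp.mul_eq_of_le hq h
  refine ⟨sub_mem hq.1 hp.1, ?_⟩
  rw [sub_mul, mul_sub, mul_sub, hq.2, hp.2, h₁, h₂, sub_self, sub_zero]

lemma sub_le (hp : S.IsProj p) (hq : S.IsProj q) (h : p ≤ q) : q - p ≤ q := by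
  obtain ⟨h₁, h₂⟩ := hp.mul_eq_of_le hq h
  exact (hp.sub hq h).le_of_mul_eq hq (by rw [sub_mul, hq.2, h₁]) (by rw [mul_sub, hq.2, h₂])

lemma le_sub_iff (hv : S.IsProj v) (hx : S.IsProj x) (hq : S.IsProj q) (hxq : x ≤ q) :
    v ≤ q - x ↔ v ≤ q ∧ v * x = 0 ∧ x * v = 0 := by
  constructor
  · intro h
    have hvq := h.trans (hx.sub_le hq hxq)
    obtain ⟨h₁, h₂⟩ := hv.mul_eq_of_le (hx.sub hq hxq) h
    obtain ⟨h₃, h₄⟩ := hv.mul_eq_of_le hq hvq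
    rw [mul_sub, h₃] at h₁
    rw [sub_mul, h₄] at h₂
    exact ⟨hvq, sub_eq_self.1 h₁, sub_eq_self.1 h₂⟩
  · rintro ⟨hvq, h₁, h₂⟩
    obtain ⟨h₃, h₄⟩ := hv.mul_eq_of_le hq hvq
    exact hv.le_of_mul_eq (hx.sub hq hxq) (by rw [mul_sub, h₃, h₁, sub_zero])
      (by rw [sub_mul, h₄, h₂, sub_zero])

lemma isInfProj_sub (hx : S.IsProj x) (hp : S.IsProj p) (hq : S.IsProj q) (hxp : x ≤ p)
    (hpq : p ≤ q) : S.IsInfProj {p, q - x} (p - x) := by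
  have hpx := hx.sub hp hxp
  have horth := ((hpx.le_sub_iff hx hp hxp).1 le_rfl).2
  refine isInfProj_pair_iff.2 ⟨hpx, hx.sub_le hp hxp,
    (hpx.le_sub_iff hx hq (hxp.trans hpq)).2 ⟨(hx.sub_le hp hxp).trans hpq, horth⟩,
    fun v hv hvp hvqx => (hv.le_sub_iff hx hp hxp).2 ⟨hvp, ?_⟩⟩
  exact ((hv.le_sub_iff hx hq (hxp.trans hpq)).1 hvqx).2

lemma mul_central (hp : S.IsProj p) (hc : S.IsCentralProj c) : S.IsProj (p * c) := by
  refine ⟨?_, ?_⟩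
  · simpa [mul_assoc, hc.comm hp.1, ← mul_assoc p p, hp.2] using S.quad_mem hp.1 hc.1.1
  · rw [mul_assoc, ← mul_assoc c, hc.comm hp.1, mul_assoc, hc.1.2, ← mul_assoc, hp.2]

lemma mul_central_le (hp : S.IsProj p) (hc : S.IsCentralProj c) : p * c ≤ p :=
  (hp.mul_central hc).le_of_mul_eq hp
    (by rw [mul_assoc, hc.comm hp.1, ← mul_assoc, hp.2]) (by rw [← mul_assoc, hp.2])

lemma mul_central_le_central (hp : S.IsProj p) (hc : S.IsCentralProj c) : p * c ≤ c :=
  (hp.mul_central hc).le_of_mul_eq hc.1 (by rw [mul_assoc, hc.1.2])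
    (by rw [← mul_assoc, hc.comm hp.1, mul_assoc, hc.1.2])

lemma mul_central_le_mul_central (hp : S.IsProj p) (hq : S.IsProj q)
    (hc : S.IsCentralProj c) (h : p ≤ q) : p * c ≤ q * c := by
  obtain ⟨h₁, h₂⟩ := hp.mul_eq_of_le hq h
  refine (hp.mul_central hc).le_of_mul_eq (hq.mul_central hc) ?_ ?_
  · rw [mul_assoc, ← mul_assoc c, hc.comm hq.1, mul_assoc, hc.1.2, ← mul_assoc, h₁]
  · rw [mul_assoc, ← mul_assoc c, hc.comm hp.1, mul_assoc, hc.1.2, ← mul_assoc, h₂]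

lemma le_mul_central (hv : S.IsProj v) (hx : S.IsProj x) (hc : S.IsCentralProj c)
    (hvx : v ≤ x) (hvc : v ≤ c) : v ≤ x * c := by
  obtain ⟨h₁, h₂⟩ := hv.mul_eq_of_le hx hvx
  obtain ⟨h₃, h₄⟩ := hv.mul_eq_of_le hc.1 hvc
  exact hv.le_of_mul_eq (hx.mul_central hc) (by rw [← mul_assoc, h₁, h₃])
    (by rw [mul_assoc, h₄, h₂])

lemma orthogonal_of_le_central (hv : S.IsProj v) (hc : S.IsCentralProj c) (hvc : v ≤ c)
    (ha : a ∈ S.A) (hac : a * c = 0) : a * v = 0 ∧ v * a = 0 := by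
  obtain ⟨h₁, h₂⟩ := hv.mul_eq_of_le hc.1 hvc
  constructor
  · rw [← h₂, ← mul_assoc, hac, zero_mul]
  · rw [← h₁, mul_assoc, hc.comm ha, hac, mul_zero]

lemma isInfProj_mul_central (hx : S.IsProj x) (hc : S.IsCentralProj c)
    (hxq : x * c ≤ q) (hqc : q ≤ c) : S.IsInfProj {x, q} (x * c) :=
  isInfProj_pair_iff.2 ⟨hx.mul_central hc, hx.mul_central_le hc, hxq,
    fun _ hv hvx hvq => hv.le_mul_central hx hc hvx (hvq.trans hqc)⟩

lemma isSupProj_mul_central (hx : S.IsProj x) (hc : S.IsCentralProj c) :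
    S.IsSupProj {x * c, x * (1 - c)} x := by
  refine isSupProj_pair_iff.2 ⟨hx, hx.mul_central_le hc, hx.mul_central_le hc.one_sub,
    fun u hu h₁ h₂ => hx.le_of_mul_eq hu ?_ ?_⟩
  · calc x * u = x * c * u + x * (1 - c) * u := by noncomm_ring
      _ = x := by rw [((hx.mul_central hc).mul_eq_of_le hu h₁).1,
          ((hx.mul_central hc.one_sub).mul_eq_of_le hu h₂).1]; noncomm_ring
  · calc u * x = u * (x * c) + u * (x * (1 - c)) := by noncomm_ring
      _ = x := by rw [((hx.mul_central hc).mul_eq_of_le hu h₁).2,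
          ((hx.mul_central hc.one_sub).mul_eq_of_le hu h₂).2]; noncomm_ring

end IsProj

lemma IsSupProj.eq_zero_of_orthogonal {F : Set R} {s v : R} (hs : S.IsSupProj F s)
    (hF : ∀ q ∈ F, S.IsProj q) (hv : S.IsProj v) (hvs : v ≤ s)
    (horth : ∀ q ∈ F, q * v = 0 ∧ v * q = 0) : v = 0 := by
  have hle : s ≤ s - v := hs.2.2 _ (hv.sub hs.1 hvs) fun q hq =>
    ((hF q hq).le_sub_iff hv hs.1 hvs).2 ⟨hs.2.1 q hq, horth q hq⟩
  exact sub_eq_self.1 (le_antisymm (hv.sub_le hs.1 hvs) hle)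

/-- Indexed form of `CentOrthSet`, with the dominating central projections made explicit. -/
structure IsCentOrthFamily (S : Synaptic R) {ι : Type*} (y d : ι → R) : Prop where
  isProj : ∀ i, S.IsProj (y i)
  isCentralProj : ∀ i, S.IsCentralProj (d i)
  le : ∀ i, y i ≤ d i
  orth : Pairwise fun i j => d i * d j = 0

lemma CentOrthSet.isCentOrthFamily {F : Set R} (hF : S.CentOrthSet F) :
    ∃ d : F → R, S.IsCentOrthFamily (↑) d := by
  obtain ⟨hproj, c, hc, horth⟩ := hF
  exact ⟨fun q => c q, fun q => hproj q q.2, fun q => (hc q q.2).1, fun q => (hc q q.2).2,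
    fun q q' hne => horth q q.2 q' q'.2 (Subtype.val_injective.ne hne)⟩

namespace IsCentOrthFamily

variable {ι : Type*} {y d : ι → R} {s x z : R}

lemma mul_eq_zero (h : S.IsCentOrthFamily y d) {i j : ι} (hij : i ≠ j) : y i * d j = 0 := by
  rw [← ((h.isProj i).mul_eq_of_le (h.isCentralProj i).1 (h.le i)).1, mul_assoc, h.orth hij,
    mul_zero]

lemma centOrthSet_range (h : S.IsCentOrthFamily y d) : S.CentOrthSet (Set.range y) := by
  classical
  refine ⟨by rintro _ ⟨i, rfl⟩; exact h.isProj i,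
    fun z => if hz : z ∈ Set.range y then d hz.choose else 0, ?_, ?_⟩
  · rintro _ ⟨i, rfl⟩
    have hi : y i ∈ Set.range y := ⟨i, rfl⟩
    dsimp only
    rw [dif_pos hi]
    exact ⟨h.isCentralProj _, hi.choose_spec.symm.le.trans (h.le _)⟩
  · rintro _ ⟨i, rfl⟩ _ ⟨j, rfl⟩ hne
    have hi : y i ∈ Set.range y := ⟨i, rfl⟩
    have hj : y j ∈ Set.range y := ⟨j, rfl⟩
    dsimp only
    rw [dif_pos hi, dif_pos hj]
    exact h.orth fun heq => hne (by rw [← hi.choose_spec, ← hj.choose_spec, heq])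

lemma sup_mul_central (h : S.IsCentOrthFamily y d) (hs : S.IsSupProj (Set.range y) s)
    (i : ι) : s * d i = y i := by
  have hc := h.isCentralProj i
  have hyi := h.isProj i
  have hsc := hs.1.mul_central hc
  have hysc : y i ≤ s * d i := hyi.le_mul_central hs.1 hc (hs.2.1 _ ⟨i, rfl⟩) (h.le i)
  have ht := hyi.sub hsc hysc
  have hts : s * d i - y i ≤ s * d i := hyi.sub_le hsc hysc
  -- `s * d i - y i` is orthogonal to every member of the family, hence zero.
  refine sub_eq_zero.1 (hs.eq_zero_of_orthogonal (by rintro _ ⟨j, rfl⟩; exact h.isProj j) ht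
    (hts.trans (hs.1.mul_central_le hc)) ?_)
  rintro _ ⟨j, rfl⟩
  by_cases hji : j = i
  · subst hji
    exact ((ht.le_sub_iff hyi hsc hysc).1 le_rfl).2.symm
  · exact ht.orthogonal_of_le_central hc (hts.trans (hs.1.mul_central_le_central hc))
      (h.isProj j).1 (h.mul_eq_zero hji)

lemma eq_zero_of_mul_central_eq_zero (h : S.IsCentOrthFamily y d)
    (hs : S.IsSupProj (Set.range y) s) (hx : S.IsProj x) (hxs : x ≤ s)
    (hxd : ∀ i, x * d i = 0) : x = 0 :=
  hs.eq_zero_of_orthogonal (by rintro _ ⟨i, rfl⟩; exact h.isProj i) hx hxs <| by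
    rintro _ ⟨i, rfl⟩
    exact ((h.isProj i).orthogonal_of_le_central (h.isCentralProj i) (h.le i) hx.1
      (hxd i)).symm

lemma isSupProj_slices (h : S.IsCentOrthFamily y d) (hco : S.CentOrthocomplete)
    (hs : S.IsSupProj (Set.range y) s) (hx : S.IsProj x) (hxs : x ≤ s) :
    S.IsSupProj (Set.range fun i => x * d i) x := by
  have hslices : S.IsCentOrthFamily (fun i => x * d i) d :=
    ⟨fun i => hx.mul_central (h.isCentralProj i),
      h.isCentralProj, fun i => hx.mul_central_le_central (h.isCentralProj i), h.orth⟩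
  -- The supremum `t` of the slices has the same slices as `x`, so `x - t` vanishes.
  obtain ⟨t, ht⟩ := hco _ hslices.centOrthSet_range
  have htx : t ≤ x := ht.2.2 x hx <| by
    rintro _ ⟨i, rfl⟩
    exact hx.mul_central_le (h.isCentralProj i)
  have hxt : x - t = 0 := h.eq_zero_of_mul_central_eq_zero hs (ht.1.sub hx htx)
    ((ht.1.sub_le hx htx).trans hxs) fun i => by
      rw [sub_mul, hslices.sup_mul_central ht i, sub_self]
  obtain rfl : x = t := sub_eq_zero.1 hxt
  exact ht

lemma le_iff_forall_mul_central_le (h : S.IsCentOrthFamily y d) (hco : S.CentOrthocomplete)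
    (hs : S.IsSupProj (Set.range y) s) (hx : S.IsProj x) (hxs : x ≤ s) (hz : S.IsProj z) :
    x ≤ z ↔ ∀ i, x * d i ≤ z * d i := by
  refine ⟨fun hxz i => hx.mul_central_le_mul_central hz (h.isCentralProj i) hxz,
    fun hxz => (h.isSupProj_slices hco hs hx hxs).2.2 z hz ?_⟩
  rintro _ ⟨i, rfl⟩
  exact (hxz i).trans (hz.mul_central_le (h.isCentralProj i))

end IsCentOrthFamily

namespace IsProj

variable {p q s : R}

lemma conj (hp : S.IsProj p) (hs : S.IsSym s) : S.IsProj (s * p * s) :=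
  ⟨S.quad_mem hs.1 hp.1, by rw [conj_mul_conj hs.2, hp.2]⟩

lemma conj_le_conj (hp : S.IsProj p) (hq : S.IsProj q) (hs : S.IsSym s) (h : p ≤ q) :
    s * p * s ≤ s * q * s := by
  obtain ⟨h₁, h₂⟩ := hp.mul_eq_of_le hq h
  exact (hp.conj hs).le_of_mul_eq (hq.conj hs) (by rw [conj_mul_conj hs.2, h₁])
    (by rw [conj_mul_conj hs.2, h₂])

lemma conj_le_conj_iff (hp : S.IsProj p) (hq : S.IsProj q) (hs : S.IsSym s) :
    s * p * s ≤ s * q * s ↔ p ≤ q := by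
  refine ⟨fun h => ?_, hp.conj_le_conj hq hs⟩
  simpa only [conj_conj hs.2] using (hp.conj hs).conj_le_conj (hq.conj hs) hs h

end IsProj

lemma projective_of_conj_mem {Q : Set R}
    (hQ : ∀ p s, S.IsProj p → S.IsSym s → s * p * s ∈ Q → p ∈ Q) : S.Projective Q := by
  rintro _ _ hq ⟨n, e, rfl, rfl, he, hstep⟩
  refine Nat.decreasingInduction (motive := fun k _ => e k ∈ Q) (fun k hk hmem => ?_) hq
    n.zero_le
  obtain ⟨s, hs, hse⟩ := hstep k hk
  exact hQ _ s (he k hk.le) hs (hse ▸ hmem)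

section Representation

variable {L L' : BOML.{u}} {p q : R}

lemma relInf_of_isInfProj (f : L.α ≃ S.Interval q) (hf : ∀ a b, L.le a b ↔ (f a : R) ≤ f b)
    {a b m : L.α} (h : S.IsInfProj {(f a : R), (f b : R)} (f m : R)) : L.RelInf a b m := by
  obtain ⟨-, h₁, h₂, h₃⟩ := isInfProj_pair_iff.1 h
  exact ⟨(hf _ _).2 h₁, (hf _ _).2 h₂, fun v hva hvb =>
    (hf _ _).2 (h₃ _ (f v).2.1 ((hf _ _).1 hva) ((hf _ _).1 hvb))⟩

lemma relSup_of_isSupProj (f : L.α ≃ S.Interval q) (hf : ∀ a b, L.le a b ↔ (f a : R) ≤ f b)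
    {a b m : L.α} (h : S.IsSupProj {(f a : R), (f b : R)} (f m : R)) : L.RelSup a b m := by
  obtain ⟨-, h₁, h₂, h₃⟩ := isSupProj_pair_iff.1 h
  exact ⟨(hf _ _).2 h₁, (hf _ _).2 h₂, fun u hau hbu =>
    (hf _ _).2 (h₃ _ (f u).2.1 ((hf _ _).1 hau) ((hf _ _).1 hbu))⟩

lemma isCentralEl_mul_central (hq : S.IsProj q) {c : R} (hc : S.IsCentralProj c)
    (f : L.α ≃ S.Interval q) (hf : ∀ a b, L.le a b ↔ (f a : R) ≤ f b)
    (hcf : ∀ a, (f (L.compl a) : R) = q - f a) :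
    L.IsCentralEl (f.symm ⟨q * c, hq.mul_central hc, hq.mul_central_le hc⟩) := by
  intro a
  have hc' := hc.one_sub
  refine ⟨f.symm ⟨(f a : R) * c, (f a).2.1.mul_central hc,
      ((f a).2.1.mul_central_le hc).trans (f a).2.2⟩,
    f.symm ⟨(f a : R) * (1 - c), (f a).2.1.mul_central hc',
      ((f a).2.1.mul_central_le hc').trans (f a).2.2⟩,
    relInf_of_isInfProj f hf ?_, relInf_of_isInfProj f hf ?_, relSup_of_isSupProj f hf ?_⟩
  all_goals simp only [hcf, Equiv.apply_symm_apply, ← mul_one_sub]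
  · exact (f a).2.1.isInfProj_mul_central hc
      ((f a).2.1.mul_central_le_mul_central hq hc (f a).2.2) (hq.mul_central_le_central hc)
  · exact (f a).2.1.isInfProj_mul_central hc'
      ((f a).2.1.mul_central_le_mul_central hq hc' (f a).2.2) (hq.mul_central_le_central hc')
  · exact (f a).2.1.isSupProj_mul_central hc

namespace RepresentsInterval

lemma isIntervalOf (hL : S.RepresentsInterval L p) (hp : S.IsProj p) (hq : S.IsProj q)
    (hpq : p ≤ q) (f : L'.α ≃ S.Interval q) (hf : ∀ a b, L'.le a b ↔ (f a : R) ≤ f b)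
    (hcf : ∀ a, (f (L'.compl a) : R) = q - f a) :
    L.IsIntervalOf L' (f.symm ⟨p, hp, hpq⟩) := by
  obtain ⟨e, he, hce⟩ := hL
  let ψ : S.Interval p ≃ {a : L'.α // L'.le a (f.symm ⟨p, hp, hpq⟩)} :=
    { toFun := fun x => ⟨f.symm ⟨x, x.2.1, x.2.2.trans hpq⟩, by simpa [hf] using x.2.2⟩
      invFun := fun a => ⟨f a, (f a).2.1, by simpa [hf] using a.2⟩
      left_inv := fun x => by simp
      right_inv := fun a => by simp }
  refine ⟨e.trans ψ, fun a b => by simp [ψ, he, hf], fun a => relInf_of_isInfProj f hf ?_⟩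
  simp only [ψ, Equiv.trans_apply, Equiv.coe_fn_mk, Equiv.apply_symm_apply, hcf, hce]
  exact (e a).2.1.isInfProj_sub hp hq (e a).2.2 hpq

lemma isoOf (hL : S.RepresentsInterval L p) (hL' : S.RepresentsInterval L' q)
    (φ : S.Interval p ≃ S.Interval q) (hφ : ∀ a b : S.Interval p, (φ a : R) ≤ φ b ↔ (a : R) ≤ b)
    (hφc : ∀ a b : S.Interval p, (b : R) = p - a → (φ b : R) = q - φ a) : L.IsoOf L' := by
  obtain ⟨e, he, hce⟩ := hL
  obtain ⟨f, hf, hcf⟩ := hL'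
  refine ⟨e.trans (φ.trans f.symm), fun a b => ?_, fun a => f.injective (Subtype.ext ?_)⟩
  · simp [he, hf, hφ]
  · simp [hcf, hφc _ _ (hce a)]

lemma isoOf_conj {s : R} (hs : S.IsSym s) (hp : S.IsProj p)
    (hL : S.RepresentsInterval L (s * p * s)) (hL' : S.RepresentsInterval L' p) :
    L.IsoOf L' := by
  refine hL.isoOf hL'
    { toFun := fun x => ⟨s * x * s, x.2.1.conj hs, by
        simpa only [conj_conj hs.2] using x.2.1.conj_le_conj (hp.conj hs) hs x.2.2⟩
      invFun := fun y => ⟨s * y * s, y.2.1.conj hs, y.2.1.conj_le_conj hp hs y.2.2⟩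
      left_inv := fun x => Subtype.ext (conj_conj hs.2 x)
      right_inv := fun y => Subtype.ext (conj_conj hs.2 y) }
    (fun a b => a.2.1.conj_le_conj_iff b.2.1 hs) fun a b hab => ?_
  simp only [Equiv.coe_fn_mk, hab, mul_sub, sub_mul, conj_conj hs.2]

lemma isProductOf {ι : Type u} {f : ι → BOML.{u}} {s : R} {y : ι → R}
    (hL : S.RepresentsInterval L s) (hf : ∀ i, S.RepresentsInterval (f i) (y i))
    (φ : S.Interval s ≃ ∀ i, S.Interval (y i))
    (hφ : ∀ a b : S.Interval s, (a : R) ≤ b ↔ ∀ i, (φ a i : R) ≤ φ b i)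
    (hφc : ∀ a b : S.Interval s, (b : R) = s - a → ∀ i, (φ b i : R) = y i - φ a i) :
    L.IsProductOf f := by
  obtain ⟨e, he, hce⟩ := hL
  choose g hg hcg using hf
  refine ⟨e.trans (φ.trans (Equiv.piCongrRight fun i => (g i).symm)), fun a b => ?_,
    fun a i => (g i).injective (Subtype.ext ?_)⟩
  · simp [he, hg, hφ]
  · simp [hcg, hφc _ _ (hce a)]

lemma isProductOf_sup {ι : Type u} {f : ι → BOML.{u}} {s : R} {y d : ι → R}
    (hco : S.CentOrthocomplete) (h : S.IsCentOrthFamily y d) (hs : S.IsSupProj (Set.range y) s)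
    (hL : S.RepresentsInterval L s) (hf : ∀ i, S.RepresentsInterval (f i) (y i)) :
    L.IsProductOf f := by
  let slices : S.Interval s → ∀ i, S.Interval (y i) := fun x i =>
    ⟨x * d i, x.2.1.mul_central (h.isCentralProj i), h.sup_mul_central hs i ▸
      x.2.1.mul_central_le_mul_central hs.1 (h.isCentralProj i) x.2.2⟩
  have hle : ∀ a b : S.Interval s, (a : R) ≤ b ↔ ∀ i, (slices a i : R) ≤ slices b i := fun a b =>
    h.le_iff_forall_mul_central_le hco hs a.2.1 a.2.2 b.2.1
  refine hL.isProductOf hf (Equiv.ofBijective slices ⟨fun a b hab => ?_, fun z => ?_⟩) hle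
    fun a b hab i => show (b : R) * d i = y i - a * d i by
      rw [hab, sub_mul, h.sup_mul_central hs i]
  · have heq : ∀ i, (slices a i : R) = slices b i := fun i =>
      congrArg Subtype.val (congrFun hab i)
    exact Subtype.ext (le_antisymm ((hle a b).2 fun i => (heq i).le)
      ((hle b a).2 fun i => (heq i).ge))
  · have hz : S.IsCentOrthFamily (fun i => (z i : R)) d :=
      ⟨fun i => (z i).2.1, h.isCentralProj, fun i => (z i).2.2.trans (h.le i), h.orth⟩
    obtain ⟨t, ht⟩ := hco _ hz.centOrthSet_range
    have hts : t ≤ s := ht.2.2 s hs.1 <| by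
      rintro _ ⟨i, rfl⟩
      exact (z i).2.2.trans (hs.2.1 _ ⟨i, rfl⟩)
    exact ⟨⟨t, ht.1, hts⟩, funext fun i => Subtype.ext (hz.sup_mul_central ht i)⟩

end RepresentsInterval

end Representation

end Synaptic

/-- If `𝒬` is an OML type class (closed under central intervals, arbitrary
cartesian products, and OML isomorphism), then
`Q := {q ∈ P : P[0,q] ∈ 𝒬}` is a projective TD subset of `P`; if moreover `𝒬`
is a strong OML type class (closed under all intervals), then `Q` is STD
(i.e. also downward closed). -/
theorem typeClass_gives_projective_TD {R : Type u} [Ring R] [PartialOrder R]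
    (S : Synaptic R) (hco : S.CentOrthocomplete)
    (𝒬 : BOML.{u} → Prop)
    (hCentral : ∀ L, 𝒬 L → ∀ c : L.α, BOML.IsCentralEl L c →
      ∀ L', BOML.IsIntervalOf L' L c → 𝒬 L')
    (hProd : ∀ (ι : Type u) (f : ι → BOML.{u}) (L : BOML.{u}),
      BOML.IsProductOf L f → (∀ i, 𝒬 (f i)) → 𝒬 L)
    (hIso : ∀ L L', BOML.IsoOf L L' → 𝒬 L → 𝒬 L')
    (PInt : R → BOML.{u})
    (hPInt : ∀ q : R, S.IsProj q → S.RepresentsInterval (PInt q) q) :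
    (S.TD {q : R | S.IsProj q ∧ 𝒬 (PInt q)} ∧
      S.Projective {q : R | S.IsProj q ∧ 𝒬 (PInt q)}) ∧
    ((∀ L, 𝒬 L → ∀ (p : L.α) (L'), BOML.IsIntervalOf L' L p → 𝒬 L') →
      S.DownwardClosed {q : R | S.IsProj q ∧ 𝒬 (PInt q)}) := by
  refine ⟨⟨⟨fun q hq => hq.1, ?sup, ?meet⟩, ?projective⟩, ?downward⟩
  case sup =>
    intro F hFQ hF p hp
    obtain ⟨d, hd⟩ := hF.isCentOrthFamily
    rw [← Subtype.range_coe (s := F)] at hp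
    exact ⟨hp.1, hProd F _ _ ((hPInt p hp.1).isProductOf_sup hco hd hp
      fun i => hPInt i (hd.isProj i)) fun i => (hFQ i.2).2⟩
  case meet =>
    rintro q ⟨hq, hQq⟩ c hc
    obtain ⟨f, hf, hcf⟩ := hPInt q hq
    have hqc := hq.mul_central hc
    exact ⟨hqc, hCentral _ hQq _ (Synaptic.isCentralEl_mul_central hq hc f hf hcf) _
      ((hPInt _ hqc).isIntervalOf hqc hq (hq.mul_central_le hc) f hf hcf)⟩
  case projective =>
    exact Synaptic.projective_of_conj_mem fun p s hp hs hsps =>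
      ⟨hp, hIso _ _ ((hPInt _ hsps.1).isoOf_conj hs hp (hPInt p hp)) hsps.2⟩
  case downward =>
    rintro hStrong q ⟨hq, hQq⟩ p hp hpq
    obtain ⟨f, hf, hcf⟩ := hPInt q hq
    exact ⟨hp, hStrong _ hQq _ _ ((hPInt p hp).isIntervalOf hp hq hpq f hf hcf)⟩
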